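/- Let s ≥ 2 and let G be a K_{s+1}-free simple graph on n vertices with G → (s, s)^v and χ(G) = 2s−1. If V(G) = I₁ ∪ … ∪ I_{2s−1} is a partition into independent sets and, for integers a, b with 2 ≤ a, b ≤ s, G' is the subgraph of G induced by the union of any a+b−1 of these independent sets, then G' → (a, b)^v. -/

import Mathlib

/-- `G → (a₁,…,a_r)ᵛ`: for every coloring of the vertices of `G` with `r` colors,
there is a color `i` and a clique of `G` on `a i` vertices all of whose vertices
receive color `i`. -/
def VArrows {V : Type*} {r : ℕ} (G : SimpleGraph V) (a : Fin r → ℕ) : Prop :=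
  ∀ c : V → Fin r, ∃ i : Fin r, ∃ t : Finset V,
    G.IsNClique (a i) t ∧ ∀ v ∈ t, c v = i


/-! Colour `s - a` of the `2s - a - b` classes outside `S` with the first colour and the
other `s - b` with the second, and use this to extend a colouring of `G'` to `G`. A
monochromatic `K_s` of `G` meets every independent class at most once, so at most `s - a`
(resp. `s - b`) of its vertices lie outside `G'`; the rest is a monochromatic `K_a`
(resp. `K_b`) of `G'`. -/

section

open Finset SimpleGraph

variable {V W ι : Type*} {G : SimpleGraph V} {r : ℕ}

theorem VArrows.of_embedding {H : SimpleGraph W} {a : Fin r → ℕ} (φ : H ↪g G)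
    (h : VArrows H a) : VArrows G a := by
  intro c
  obtain ⟨i, t, ht, htc⟩ := h (c ∘ φ)
  refine ⟨i, t.map φ.toEmbedding, ⟨?_, by rw [card_map, ht.card_eq]⟩, by simpa using htc⟩
  rw [coe_map]
  rintro _ ⟨v, hv, rfl⟩ _ ⟨w, hw, rfl⟩ hvw
  exact φ.map_adj_iff.mpr (ht.isClique hv hw (ne_of_apply_ne _ hvw))

theorem SimpleGraph.IsClique.card_le_of_coloring_mem (C : G.Coloring ι) {t : Finset V}
    (ht : G.IsClique (t : Set V)) {W : Finset ι} (htW : ∀ v ∈ t, C v ∈ W) : #t ≤ #W :=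
  card_le_card_of_injOn C htW fun _ hv _ hw hvw =>
    by_contra fun hne => C.valid (ht hv hw hne) hvw

theorem SimpleGraph.IsClique.exists_isNClique_induce {U : Set V} {t : Finset V}
    (ht : G.IsClique (t : Set V)) (htU : ∀ v ∈ t, v ∈ U) {k : ℕ} (hk : k ≤ #t) :
    ∃ t' : Finset U, (G.induce U).IsNClique k t' ∧ ∀ v ∈ t', (v : V) ∈ t := by
  classical
  obtain ⟨t'', ht'', hcard⟩ := exists_subset_card_eq hk
  refine ⟨t''.subtype (· ∈ U), ⟨?_, ?_⟩, fun v hv => ht'' (mem_subtype.mp hv)⟩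
  · intro x hx y hy hxy
    exact ht (ht'' (mem_subtype.mp hx)) (ht'' (mem_subtype.mp hy)) (Subtype.coe_injective.ne hxy)
  · rw [card_subtype, filter_true_of_mem fun v hv => htU v (ht'' hv), hcard]

theorem exists_coloring_forall_mem (I : ι → Set V)
    (hI : ∀ i, ∀ v ∈ I i, ∀ w ∈ I i, ¬ G.Adj v w) (hcover : ⋃ i, I i = Set.univ) :
    ∃ C : G.Coloring ι, ∀ v, v ∈ I (C v) := by
  choose f hf using fun v => Set.mem_iUnion.mp (hcover ▸ Set.mem_univ v)
  exact ⟨Coloring.mk f fun {v w} hvw hf' => hI (f v) v (hf v) w (hf' ▸ hf w) hvw, hf⟩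

theorem VArrows.induce_coloring_preimage [Fintype ι] [DecidableEq ι] {a b : Fin r → ℕ}
    (h : VArrows G a) (C : G.Coloring ι) (S : Finset ι) (g : ι → Fin r)
    (hab : ∀ i, b i + #{j ∈ Sᶜ | g j = i} ≤ a i) :
    VArrows (G.induce {v | C v ∈ S}) b := by
  intro c
  let d : V → Fin r := fun v => if hv : C v ∈ S then c ⟨v, hv⟩ else g (C v)
  obtain ⟨i, t, ht, htd⟩ := h d
  have hout : #{v ∈ t | C v ∉ S} ≤ #{j ∈ Sᶜ | g j = i} :=
    (ht.isClique.subset (filter_subset _ _)).card_le_of_coloring_mem C fun v hv => by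
      obtain ⟨hvt, hvS⟩ := mem_filter.mp hv
      simpa [d, hvS] using htd v hvt
  have hin : b i ≤ #{v ∈ t | C v ∈ S} := by
    linarith [hab i, ht.card_eq, card_filter_add_card_filter_not (s := t) (p := (C · ∈ S))]
  obtain ⟨t', ht', ht't⟩ :=
    (ht.isClique.subset (filter_subset (C · ∈ S) t)).exists_isNClique_induce
      (fun v hv => (mem_filter.mp hv).2) hin
  refine ⟨i, t', ht', fun v hv => ?_⟩
  have hvS : C v ∈ S := v.2
  simpa [d, hvS] using htd v (filter_subset _ _ (ht't v hv))

theorem VArrows.induce_coloring_preimage_of_split [Fintype ι] [DecidableEq ι] {p q a b : ℕ}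
    (h : VArrows G ![p, q]) (C : G.Coloring ι) (S T : Finset ι)
    (ha : a + #T ≤ p) (hb : b + #(Sᶜ \ T) ≤ q) :
    VArrows (G.induce {v | C v ∈ S}) ![a, b] := by
  refine h.induce_coloring_preimage C S (fun j => if j ∈ T then 0 else 1)
    (Fin.forall_fin_two.mpr ⟨(Nat.add_le_add_left (card_le_card fun j hj => ?_) a).trans ha,
      (Nat.add_le_add_left (card_le_card fun j hj => ?_) b).trans hb⟩)
  · by_contra hjT
    simp [hjT] at hj
  · by_cases hjT : j ∈ T <;> simp_all

end

theorem stmt_6_general {V : Type*} (s a b : ℕ)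
    (has : a ≤ s) (hbs : b ≤ s)
    (G : SimpleGraph V)
    (hGarr : VArrows G ![s, s])
    (I : Fin (2 * s - 1) → Set V)
    (hIindep : ∀ i, ∀ v ∈ I i, ∀ w ∈ I i, ¬ G.Adj v w)
    (hIcover : ⋃ i, I i = Set.univ)
    (S : Finset (Fin (2 * s - 1))) (hS : S.card = a + b - 1) :
    VArrows (G.induce (⋃ i ∈ S, I i)) ![a, b] := by
  obtain ⟨C, hC⟩ := exists_coloring_forall_mem I hIindep hIcover
  have hcompl : Sᶜ.card = 2 * s - 1 - (a + b - 1) := by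
    rw [Finset.card_compl, Fintype.card_fin, hS]
  obtain ⟨T, hTS, hT⟩ : ∃ T ⊆ Sᶜ, T.card = s - a := Finset.exists_subset_card_eq (by omega)
  have hrest : (Sᶜ \ T).card = Sᶜ.card - (s - a) := by rw [Finset.card_sdiff_of_subset hTS, hT]
  exact (hGarr.induce_coloring_preimage_of_split C S T (by omega) (by omega)).of_embedding
    (SimpleGraph.induceHomOfLE G fun v hv => Set.mem_biUnion hv (hC v))

/-- Let `G` be a `K_{s+1}`-free graph with `G → (s,s)ᵛ` and `χ(G) = 2s-1`, and let
`V(G) = I₁ ∪ ⋯ ∪ I_{2s-1}` be a partition into independent sets. If `2 ≤ a, b ≤ s`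
and `G'` is the subgraph of `G` induced by the union of any `a+b-1` of these
independent sets, then `G' → (a,b)ᵛ`. -/
theorem stmt_6 {V : Type*} [Fintype V] (s a b : ℕ) (hs : 2 ≤ s)
    (ha : 2 ≤ a) (has : a ≤ s) (hb : 2 ≤ b) (hbs : b ≤ s)
    (G : SimpleGraph V)
    (hGfree : G.CliqueFree (s + 1)) (hGarr : VArrows G ![s, s])
    (hGchi : G.chromaticNumber = ((2 * s - 1 : ℕ) : ℕ∞))
    (I : Fin (2 * s - 1) → Set V)
    (hIindep : ∀ i, ∀ v ∈ I i, ∀ w ∈ I i, ¬ G.Adj v w)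
    (hIdisj : ∀ i j, i ≠ j → Disjoint (I i) (I j))
    (hIcover : ⋃ i, I i = Set.univ)
    (S : Finset (Fin (2 * s - 1))) (hS : S.card = a + b - 1) :
    VArrows (G.induce (⋃ i ∈ S, I i)) ![a, b] :=
  stmt_6_general s a b has hbs G hGarr I hIindep hIcover S hS
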